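/- arXiv:1406.5906 — 9 statements merged into one kernel-verified Lean document; each statement's English description precedes it below -/
import Mathlib

section
/- Let E be a finite-dimensional real inner product space and let φ be an invertible linear map on E with ‖φ‖ ≤ C and ‖φ⁻¹‖ ≤ C for some C ≥ 1. Then the induced map on the projective space of E is C²-Lipschitz with respect to the angle metric α(x̄,ȳ) = arccos(|⟨x,y⟩|/(‖x‖‖y‖)). -/
/-!
Under `φ`, the sine of the projective angle between `x` and `y` (the distance from `x / ‖x‖` to
the line `ℝ y`) grows by at most the condition number `K = ‖φ‖ ‖φ⁻¹‖ ≤ C²`. To pass from sines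
to angles, cut the great circle from `x / ‖x‖` to `y / ‖y‖`, of length `α = angle x y`, into `n`
arcs: each image arc has projective angle at most `arcsin (K sin (α / n))`, so by the triangle
inequality `projAngle (φ x) (φ y) ≤ n arcsin (K sin (α / n)) → K α`. Replacing `y` by `-y` turns
`α` into `π - α`, and the smaller of the two is `projAngle x y`.
-/

open RealInnerProductSpace

/-- The projective angle metric between (the lines spanned by) two vectors. -/
noncomputable def projAngle {E : Type*} [NormedAddCommGroup E] [InnerProductSpace ℝ E]
    (x y : E) : ℝ := Real.arccos (|(inner ℝ x y : ℝ)| / (‖x‖ * ‖y‖))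

open Real Filter Topology InnerProductGeometry

section

variable {E F : Type*} [NormedAddCommGroup E] [InnerProductSpace ℝ E]
  [NormedAddCommGroup F] [InnerProductSpace ℝ F]

lemma projAngle_eq_min_angle (x y : E) : projAngle x y = min (angle x y) (angle x (-y)) := by
  set c := ⟪x, y⟫ / (‖x‖ * ‖y‖)
  have hc : |⟪x, y⟫| / (‖x‖ * ‖y‖) = |c| := by
    rw [abs_div, abs_of_nonneg (mul_nonneg (norm_nonneg x) (norm_nonneg y))]
  rw [projAngle, hc, angle_neg_right, angle, ← arccos_neg]
  rcases le_total 0 c with h | h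
  · rw [abs_of_nonneg h, min_eq_left (arccos_le_arccos (by linarith))]
  · rw [abs_of_nonpos h, min_eq_right (arccos_le_arccos (by linarith))]

lemma projAngle_nonneg (x y : E) : 0 ≤ projAngle x y := arccos_nonneg _

lemma projAngle_le_pi_div_two (x y : E) : projAngle x y ≤ π / 2 :=
  arccos_le_pi_div_two.2 (by positivity)

lemma projAngle_le_arcsin_iff (x y : E) {r : ℝ} :
    projAngle x y ≤ arcsin r ↔ sin (projAngle x y) ≤ r :=
  le_arcsin_iff_sin_le' ⟨by linarith [projAngle_nonneg x y, pi_pos], projAngle_le_pi_div_two x y⟩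

lemma sin_projAngle (x y : E) : sin (projAngle x y) = sin (angle x y) := by
  rw [projAngle_eq_min_angle, angle_neg_right]
  rcases min_choice (angle x y) (π - angle x y) with h | h <;> rw [h]
  exact sin_pi_sub _

lemma projAngle_neg_right (x y : E) : projAngle x (-y) = projAngle x y := by
  simp [projAngle]

lemma projAngle_smul_left (x y : E) {r : ℝ} (hr : r ≠ 0) :
    projAngle (r • x) y = projAngle x y := by
  rw [projAngle, projAngle, real_inner_smul_left, abs_mul, norm_smul, norm_eq_abs,
    mul_assoc, mul_div_mul_left _ _ (abs_ne_zero.2 hr)]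

lemma projAngle_smul_right (x y : E) {r : ℝ} (hr : r ≠ 0) :
    projAngle x (r • y) = projAngle x y := by
  rw [projAngle, projAngle, real_inner_smul_right, abs_mul, norm_smul, norm_eq_abs,
    mul_left_comm, mul_div_mul_left _ _ (abs_ne_zero.2 hr)]

/-- Realizing each minimum by a sign choice reduces this to the triangle inequality for `angle`. -/
lemma projAngle_le_projAngle_add_projAngle (x y z : E) :
    projAngle x z ≤ projAngle x y + projAngle y z := by
  have hz : projAngle x z ≤ angle x z := projAngle_eq_min_angle x z ▸ min_le_left _ _
  have hnz : projAngle x z ≤ angle x (-z) := projAngle_eq_min_angle x z ▸ min_le_right _ _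
  rw [projAngle_eq_min_angle x y, projAngle_eq_min_angle y z]
  rcases min_choice (angle x y) (angle x (-y)) with h₁ | h₁ <;>
    rcases min_choice (angle y z) (angle y (-z)) with h₂ | h₂ <;> rw [h₁, h₂]
  · exact hz.trans (angle_le_angle_add_angle _ _ _)
  · exact hnz.trans (angle_le_angle_add_angle _ _ _)
  · rw [← angle_neg_neg y z]
    exact hnz.trans (angle_le_angle_add_angle _ _ _)
  · rw [← angle_neg_neg y, neg_neg]
    exact hz.trans (angle_le_angle_add_angle _ _ _)

lemma norm_sub_smul_sq_mul_norm_sq (x y : E) (t : ℝ) :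
    ‖x - t • y‖ ^ 2 * ‖y‖ ^ 2
      = (sin (angle x y) * ‖x‖ * ‖y‖) ^ 2 + (t * ‖y‖ ^ 2 - ⟪x, y⟫) ^ 2 := by
  have hgram : 0 ≤ ⟪x, x⟫ * ⟪y, y⟫ - ⟪x, y⟫ * ⟪x, y⟫ := by
    rw [real_inner_self_eq_norm_mul_norm, real_inner_self_eq_norm_mul_norm]
    nlinarith [abs_real_inner_le_norm x y, abs_nonneg ⟪x, y⟫, sq_abs ⟪x, y⟫]
  rw [mul_assoc, sin_angle_mul_norm_mul_norm, sq_sqrt hgram, norm_sub_sq_real,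
    real_inner_smul_right, norm_smul, norm_eq_abs, mul_pow, sq_abs,
    real_inner_self_eq_norm_sq, real_inner_self_eq_norm_sq]
  ring

lemma sin_angle_mul_norm_le_norm_sub_smul (x y : E) (t : ℝ) :
    sin (angle x y) * ‖x‖ ≤ ‖x - t • y‖ := by
  rcases eq_or_ne y 0 with rfl | hy
  · simp [angle_zero_right]
  have hy' : 0 < ‖y‖ := norm_pos_iff.2 hy
  have hsin := sin_angle_nonneg x y
  refine le_of_mul_le_mul_right ?_ hy'
  rw [← pow_le_pow_iff_left₀ (by positivity) (by positivity) two_ne_zero, mul_pow (‖_‖),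
    norm_sub_smul_sq_mul_norm_sq x y t]
  exact le_add_of_nonneg_right (sq_nonneg _)

lemma sin_angle_mul_norm_eq_norm_sub_smul (x y : E) :
    sin (angle x y) * ‖x‖ = ‖x - (⟪x, y⟫ / ‖y‖ ^ 2) • y‖ := by
  rcases eq_or_ne y 0 with rfl | hy
  · simp [angle_zero_right]
  have hy' : 0 < ‖y‖ := norm_pos_iff.2 hy
  have hsin := sin_angle_nonneg x y
  have hsq := norm_sub_smul_sq_mul_norm_sq x y (⟪x, y⟫ / ‖y‖ ^ 2)
  rw [div_mul_cancel₀ _ (by positivity), sub_self, zero_pow two_ne_zero, add_zero,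
    ← mul_pow, pow_left_inj₀ (by positivity) (by positivity) two_ne_zero]
    at hsq
  exact (mul_right_cancel₀ hy'.ne' hsq).symm

lemma sin_angle_map_le (φ : E ≃L[ℝ] F) {a : E} (ha : a ≠ 0) (b : E) :
    sin (angle (φ a) (φ b))
      ≤ ‖(φ : E →L[ℝ] F)‖ * ‖(φ.symm : F →L[ℝ] E)‖ * sin (angle a b) := by
  have hφa : 0 < ‖φ a‖ := norm_pos_iff.2 (φ.map_ne_zero_iff.2 ha)
  set t := ⟪a, b⟫ / ‖b‖ ^ 2
  refine le_of_mul_le_mul_right ?_ hφa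
  calc sin (angle (φ a) (φ b)) * ‖φ a‖
      ≤ ‖φ a - t • φ b‖ := sin_angle_mul_norm_le_norm_sub_smul _ _ t
    _ = ‖(φ : E →L[ℝ] F) (a - t • b)‖ := by simp
    _ ≤ ‖(φ : E →L[ℝ] F)‖ * ‖a - t • b‖ := ContinuousLinearMap.le_opNorm _ _
    _ = ‖(φ : E →L[ℝ] F)‖ * (sin (angle a b) * ‖a‖) := by
      rw [sin_angle_mul_norm_eq_norm_sub_smul]
    _ ≤ ‖(φ : E →L[ℝ] F)‖ * (sin (angle a b) * (‖(φ.symm : F →L[ℝ] E)‖ * ‖φ a‖)) := by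
      gcongr
      · exact sin_angle_nonneg a b
      · simpa using (φ.symm : F →L[ℝ] E).le_opNorm (φ a)
    _ = _ := by ring

lemma exists_great_circle {u v : E} (hu : ‖u‖ = 1) (hv : ‖v‖ = 1) (huv : sin (angle u v) ≠ 0) :
    ∃ γ : ℝ → E, γ 0 = u ∧ γ (angle u v) = v ∧ ∀ s t, ⟪γ s, γ t⟫ = cos (s - t) := by
  set β := angle u v
  have hcos : cos β = ⟪u, v⟫ := by rw [cos_angle, hu, hv, mul_one, div_one]
  have huu : ⟪u, u⟫ = 1 := by rw [real_inner_self_eq_norm_sq, hu, one_pow]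
  have hvv : ⟪v, v⟫ = 1 := by rw [real_inner_self_eq_norm_sq, hv, one_pow]
  set w := (sin β)⁻¹ • (v - cos β • u)
  have huw : ⟪u, w⟫ = 0 := by
    simp only [w, real_inner_smul_right, inner_sub_right, huu, hcos]
    ring
  have hww : ⟪w, w⟫ = 1 := by
    simp only [w, real_inner_smul_left, real_inner_smul_right, inner_sub_left, inner_sub_right,
      huu, hvv, real_inner_comm u v, ← hcos]
    field_simp
    linear_combination -sin_sq_add_cos_sq β
  refine ⟨fun t ↦ cos t • u + sin t • w, by simp, ?_, fun s t ↦ ?_⟩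
  · simp only [w, smul_smul, mul_inv_cancel₀ huv, one_smul]
    abel
  · simp only [inner_add_left, inner_add_right, real_inner_smul_left, real_inner_smul_right, huu,
      hww, huw, real_inner_comm u w, cos_sub]
    ring

lemma sin_angle_eq_abs_sin_of_inner_eq_cos {a b : E} {θ : ℝ} (ha : ⟪a, a⟫ = 1) (hb : ⟪b, b⟫ = 1)
    (hab : ⟪a, b⟫ = cos θ) : sin (angle a b) = |sin θ| := by
  have hnorm : ∀ x : E, ⟪x, x⟫ = 1 → ‖x‖ = 1 := fun x hx ↦ by
    rwa [real_inner_self_eq_norm_sq, pow_eq_one_iff_of_nonneg (norm_nonneg x) two_ne_zero] at hx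
  have h := sin_angle_mul_norm_mul_norm a b
  rw [hnorm a ha, hnorm b hb, ha, hb, hab, mul_one, mul_one, ← sq, ← sin_sq, sqrt_sq_eq_abs]
    at h
  exact h

lemma tendsto_succ_mul_arcsin_mul_sin_div (K β : ℝ) :
    Tendsto (fun n : ℕ ↦ ((n : ℝ) + 1) * arcsin (K * sin (β / ((n : ℝ) + 1)))) atTop
      (𝓝 (K * β)) := by
  have hderiv : HasDerivAt (fun t ↦ arcsin (K * sin (β * t))) (K * β) 0 := by
    simpa [Function.comp_def] using (hasDerivAt_arcsin (by simp) (by simp)).comp (0 : ℝ)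
      (((hasDerivAt_id (0 : ℝ)).const_mul β).sin.const_mul K)
  have hseq : Tendsto (fun n : ℕ ↦ 1 / ((n : ℝ) + 1)) atTop (𝓝[≠] 0) :=
    tendsto_nhdsWithin_iff.2 ⟨tendsto_one_div_add_atTop_nhds_zero_nat,
      Eventually.of_forall fun n ↦ by simp only [Set.mem_compl_singleton_iff]; positivity⟩
  refine (hderiv.tendsto_slope_zero.comp hseq).congr fun n ↦ ?_
  simp [div_eq_mul_inv]

lemma projAngle_le_mul_of_sin_projAngle_le {g : ℝ → F} {K β : ℝ} (hβ : 0 ≤ β)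
    (hg : ∀ s h, 0 ≤ h → h ≤ β → sin (projAngle (g s) (g (s + h))) ≤ K * sin h) :
    projAngle (g 0) (g β) ≤ K * β := by
  have hstep : ∀ s h, 0 ≤ h → h ≤ β → projAngle (g s) (g (s + h)) ≤ arcsin (K * sin h) :=
    fun s h h₀ hhβ ↦ (projAngle_le_arcsin_iff _ _).2 (hg s h h₀ hhβ)
  have hchain : ∀ h, 0 ≤ h → h ≤ β → ∀ m : ℕ,
      projAngle (g 0) (g ((m + 1) * h)) ≤ (m + 1) * arcsin (K * sin h) := by
    intro h h₀ hhβ m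
    induction m with
    | zero => simpa using hstep 0 h h₀ hhβ
    | succ m ih =>
      calc projAngle (g 0) (g (((m + 1 : ℕ) + 1) * h))
          ≤ projAngle (g 0) (g ((m + 1) * h))
            + projAngle (g ((m + 1) * h)) (g ((m + 1) * h + h)) := by
            rw [show (((m + 1 : ℕ) : ℝ) + 1) * h = (m + 1) * h + h by push_cast; ring]
            exact projAngle_le_projAngle_add_projAngle _ _ _
        _ ≤ (m + 1) * arcsin (K * sin h) + arcsin (K * sin h) :=
            add_le_add ih (hstep _ h h₀ hhβ)
        _ = ((m + 1 : ℕ) + 1) * arcsin (K * sin h) := by push_cast; ring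
  refine ge_of_tendsto' (tendsto_succ_mul_arcsin_mul_sin_div K β) fun n ↦ ?_
  have hn : (0 : ℝ) < n + 1 := by positivity
  simpa [mul_div_cancel₀ _ hn.ne'] using
    hchain (β / (n + 1)) (by positivity) (div_le_self hβ (by linarith)) n

theorem projAngle_map_le_mul_angle (φ : E ≃L[ℝ] F) {x y : E} (hx : x ≠ 0) (hy : y ≠ 0)
    (hxy : sin (angle x y) ≠ 0) :
    projAngle (φ x) (φ y) ≤ ‖(φ : E →L[ℝ] F)‖ * ‖(φ.symm : F →L[ℝ] E)‖ * angle x y := by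
  have hangle : angle (NormedSpace.normalize x) (NormedSpace.normalize y) = angle x y := by
    rw [angle_normalize_left, angle_normalize_right]
  obtain ⟨γ, hγ₀, hγβ, hγ⟩ := exists_great_circle (NormedSpace.norm_normalize_eq_one_iff.2 hx)
    (NormedSpace.norm_normalize_eq_one_iff.2 hy) (hangle ▸ hxy)
  have himage : projAngle (φ x) (φ y) = projAngle (φ (γ 0)) (φ (γ (angle x y))) := by
    rw [hγ₀, ← hangle, hγβ, NormedSpace.normalize, NormedSpace.normalize, map_smul, map_smul,
      projAngle_smul_left _ _ (inv_ne_zero (norm_ne_zero_iff.2 hx)),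
      projAngle_smul_right _ _ (inv_ne_zero (norm_ne_zero_iff.2 hy))]
  rw [himage]
  refine projAngle_le_mul_of_sin_projAngle_le (g := φ ∘ γ) (angle_nonneg x y)
    fun s h h₀ hh ↦ ?_
  have hγs : γ s ≠ 0 := fun h ↦ by simpa [h] using hγ s s
  calc sin (projAngle (φ (γ s)) (φ (γ (s + h))))
      = sin (angle (φ (γ s)) (φ (γ (s + h)))) := sin_projAngle _ _
    _ ≤ ‖(φ : E →L[ℝ] F)‖ * ‖(φ.symm : F →L[ℝ] E)‖ * sin (angle (γ s) (γ (s + h))) :=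
      sin_angle_map_le φ hγs _
    _ = ‖(φ : E →L[ℝ] F)‖ * ‖(φ.symm : F →L[ℝ] E)‖ * sin h := by
      rw [sin_angle_eq_abs_sin_of_inner_eq_cos (by simpa using hγ s s)
        (by simpa using hγ (s + h) (s + h)) (hγ s (s + h)), sub_add_cancel_left, sin_neg,
        abs_neg, abs_of_nonneg (sin_nonneg_of_nonneg_of_le_pi h₀ (hh.trans (angle_le_pi x y)))]

theorem projAngle_map_le (φ : E ≃L[ℝ] F) {x y : E} (hx : x ≠ 0) (hy : y ≠ 0) :
    projAngle (φ x) (φ y) ≤ ‖(φ : E →L[ℝ] F)‖ * ‖(φ.symm : F →L[ℝ] E)‖ * projAngle x y := by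
  have hK : 0 ≤ ‖(φ : E →L[ℝ] F)‖ * ‖(φ.symm : F →L[ℝ] E)‖ := by positivity
  rcases eq_or_ne (sin (angle x y)) 0 with hxy | hxy
  · have hsin : sin (projAngle (φ x) (φ y)) ≤ 0 := by
      simpa [sin_projAngle, hxy] using sin_angle_map_le φ hx y
    calc projAngle (φ x) (φ y) ≤ arcsin 0 := (projAngle_le_arcsin_iff _ _).2 hsin
      _ = 0 := arcsin_zero
      _ ≤ _ := mul_nonneg hK (projAngle_nonneg x y)
  have hxy' : sin (angle x (-y)) ≠ 0 := by rwa [angle_neg_right, sin_pi_sub]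
  rw [projAngle_eq_min_angle x y, mul_min_of_nonneg _ _ hK]
  refine le_min (projAngle_map_le_mul_angle φ hx hy hxy) ?_
  rw [← projAngle_neg_right, ← map_neg]
  exact projAngle_map_le_mul_angle φ hx (neg_ne_zero.2 hy) hxy'

end

theorem lipschitz_projective_of_bounded_general {E : Type*} [NormedAddCommGroup E]
    [InnerProductSpace ℝ E]
    (φ : E ≃L[ℝ] E) (C : ℝ)
    (hφ : ‖(φ : E →L[ℝ] E)‖ ≤ C) (hφinv : ‖(φ.symm : E →L[ℝ] E)‖ ≤ C) :
    ∀ x y : E, x ≠ 0 → y ≠ 0 →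
      projAngle (φ x) (φ y) ≤ C ^ 2 * projAngle x y := by
  intro x y hx hy
  have hC : 0 ≤ C := (norm_nonneg _).trans hφ
  calc projAngle (φ x) (φ y)
      ≤ ‖(φ : E →L[ℝ] E)‖ * ‖(φ.symm : E →L[ℝ] E)‖ * projAngle x y := projAngle_map_le φ hx hy
    _ ≤ C ^ 2 * projAngle x y := by
      rw [sq]
      exact mul_le_mul_of_nonneg_right (mul_le_mul hφ hφinv (norm_nonneg _) hC)
        (projAngle_nonneg x y)

/-- A bi-bounded invertible linear map induces a `C²`-Lipschitz map on projective space. -/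
theorem lipschitz_projective_of_bounded {E : Type*} [NormedAddCommGroup E]
    [InnerProductSpace ℝ E] [FiniteDimensional ℝ E]
    (φ : E ≃L[ℝ] E) (C : ℝ) (hC : 1 ≤ C)
    (hφ : ‖(φ : E →L[ℝ] E)‖ ≤ C) (hφinv : ‖(φ.symm : E →L[ℝ] E)‖ ≤ C) :
    ∀ x y : E, x ≠ 0 → y ≠ 0 →
      projAngle (φ x) (φ y) ≤ C ^ 2 * projAngle x y :=
  lipschitz_projective_of_bounded_general φ C hφ hφinv
end

section
/- For every real θ ∈ [0, π/2] and every positive integer p, arccos((cos θ)^p) ≤ √p · θ. -/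
/-!
The map `θ ↦ arccos ((cos θ) ^ p)` vanishes at `0`, and by the mean value theorem it suffices
that its derivative `p cos^(p-1) θ sin θ / √(1 - cos^(2p) θ)` is at most `√p` on `(0, π/2)`.
After squaring and writing `y = cos² θ`, this is `p y^(p-1) (1 - y) ≤ 1 - y^p`, which follows from
`1 - y^p = (1 - y)(1 + y + ⋯ + y^(p-1))` by bounding each term of the geometric sum below by `y^(p-1)`.
-/

open Real Set Finset

theorem nat_mul_pow_pred_mul_one_sub_le_one_sub_pow {R : Type*} [CommRing R] [PartialOrder R]
    [IsOrderedRing R] {x : R} (hx₀ : 0 ≤ x) (hx₁ : x ≤ 1) (n : ℕ) :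
    n * x ^ (n - 1) * (1 - x) ≤ 1 - x ^ n := by
  calc n * x ^ (n - 1) * (1 - x) = (∑ _i ∈ range n, x ^ (n - 1)) * (1 - x) := by
        rw [sum_const, card_range, nsmul_eq_mul]
    _ ≤ (∑ i ∈ range n, x ^ i) * (1 - x) :=
        mul_le_mul_of_nonneg_right (sum_le_sum fun i hi =>
          pow_le_pow_of_le_one hx₀ hx₁ (Nat.le_sub_one_of_lt (mem_range.1 hi))) (sub_nonneg.2 hx₁)
    _ = 1 - x ^ n := geom_sum_mul_of_le_one hx₁ n

theorem sq_nat_mul_cos_pow_pred_mul_sin_le (p : ℕ) (x : ℝ) :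
    (p * cos x ^ (p - 1) * sin x) ^ 2 ≤ p * (1 - (cos x ^ p) ^ 2) := by
  have key := nat_mul_pow_pred_mul_one_sub_le_one_sub_pow (sq_nonneg (cos x)) (cos_sq_le_one x) p
  calc (p * cos x ^ (p - 1) * sin x) ^ 2
      = p * (p * (cos x ^ 2) ^ (p - 1) * sin x ^ 2) := by ring
    _ = p * (p * (cos x ^ 2) ^ (p - 1) * (1 - cos x ^ 2)) := by rw [sin_sq]
    _ ≤ p * (1 - (cos x ^ 2) ^ p) := by gcongr
    _ = p * (1 - (cos x ^ p) ^ 2) := by ring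

theorem hasDerivAt_arccos_cos_pow {p : ℕ} (hp : p ≠ 0) {x : ℝ} (hx : x ∈ Ioo 0 (π / 2)) :
    HasDerivAt (fun y => arccos (cos y ^ p))
      (p * cos x ^ (p - 1) * sin x / √(1 - (cos x ^ p) ^ 2)) x := by
  have hcos₀ : 0 < cos x := cos_pos_of_mem_Ioo ⟨by linarith [hx.1, pi_pos], hx.2⟩
  have hcos₁ : cos x < 1 := by
    simpa using cos_lt_cos_of_nonneg_of_le_pi le_rfl (by linarith [pi_pos, hx.2]) hx.1
  have hpow₁ : cos x ^ p < 1 := pow_lt_one₀ hcos₀.le hcos₁ hp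
  refine ((hasDerivAt_arccos (by linarith [pow_pos hcos₀ p]) hpow₁.ne).comp x
    ((hasDerivAt_cos x).pow p)).congr_deriv ?_
  ring

theorem nat_mul_cos_pow_pred_mul_sin_div_le_sqrt (p : ℕ) (x : ℝ) :
    p * cos x ^ (p - 1) * sin x / √(1 - (cos x ^ p) ^ 2) ≤ √p := by
  have hb : 0 ≤ 1 - (cos x ^ p) ^ 2 := by
    rw [sub_nonneg, ← pow_mul, mul_comm, pow_mul]
    exact pow_le_one₀ (sq_nonneg _) (cos_sq_le_one x)
  calc p * cos x ^ (p - 1) * sin x / √(1 - (cos x ^ p) ^ 2)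
      ≤ |p * cos x ^ (p - 1) * sin x| / √(1 - (cos x ^ p) ^ 2) := by gcongr; exact le_abs_self _
    _ = √((p * cos x ^ (p - 1) * sin x) ^ 2 / (1 - (cos x ^ p) ^ 2)) := by
        rw [sqrt_div' _ hb, sqrt_sq_eq_abs]
    _ ≤ √p := sqrt_le_sqrt (div_le_of_le_mul₀ hb (Nat.cast_nonneg p)
        (by linarith [sq_nat_mul_cos_pow_pred_mul_sin_le p x]))

/-- For `θ ∈ [0, π/2]` and a positive integer `p`, `arccos((cos θ)^p) ≤ √p · θ`. -/
theorem arccos_cos_pow_le (θ : ℝ) (hθ0 : 0 ≤ θ) (hθ : θ ≤ Real.pi / 2)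
    (p : ℕ) (hp : 0 < p) :
    Real.arccos ((Real.cos θ) ^ p) ≤ Real.sqrt p * θ := by
  have hderiv : ∀ x ∈ interior (Icc 0 (π / 2)), HasDerivAt (fun y => arccos (cos y ^ p))
      (p * cos x ^ (p - 1) * sin x / √(1 - (cos x ^ p) ^ 2)) x := by
    rw [interior_Icc]
    exact fun x hx => hasDerivAt_arccos_cos_pow hp.ne' hx
  have hmvt := (convex_Icc 0 (π / 2)).image_sub_le_mul_sub_of_deriv_le
    (by fun_prop : ContinuousOn (fun y => arccos (cos y ^ p)) _)
    (fun x hx => (hderiv x hx).differentiableAt.differentiableWithinAt)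
    (fun x hx => (hderiv x hx).deriv ▸ nat_mul_cos_pow_pred_mul_sin_div_le_sqrt p x)
    0 ⟨le_rfl, by positivity⟩ θ ⟨hθ0, hθ⟩ hθ0
  simpa using hmvt
end

section
/- Let E be a finite-dimensional real inner product space and let A₁, A₂ be two p-dimensional subspaces of E. Define α₁ to be the Hausdorff distance between the unit spheres of A₁ and A₂ measured in the projective angle metric (equivalently the largest principal angle between A₁ and A₂), and α₂ the angle between the lines Λ^p A₁ and Λ^p A₂ in Λ^p E. Then α₁ ≤ α₂ ≤ √p · α₁. -/
/-!
The Gram matrix `⟪uᵢ, vⱼ⟫` is diagonal, so `cos α₂ = ∏ᵢ cos θᵢ`. Since every factor lies in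
`[0, 1]`, this product is at most `cos θ₁`, whence `α₁ ≤ α₂`. For the upper bound, the function
`t ↦ log (cos √t)` is concave on `[0, (π/2)²)` (its derivative `-tan √t / (2√t)` decreases because
`tan s / s` increases, by convexity of `tan`) and vanishes at `0`, hence is subadditive. This gives
`cos √(∑ θᵢ²) ≤ ∏ᵢ cos θᵢ`, i.e. `α₂ ≤ √(∑ θᵢ²) ≤ √p · θ₁`.
-/

open Real Set Finset

namespace Real

lemma convexOn_tan : ConvexOn ℝ (Ico 0 (π / 2)) tan := by
  have hcos : ∀ x ∈ Ico (0 : ℝ) (π / 2), 0 < cos x := fun x hx =>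
    cos_pos_of_mem_Ioo ⟨by linarith [pi_pos, hx.1], hx.2⟩
  refine MonotoneOn.convexOn_of_deriv (convex_Ico _ _) ?_ ?_ ?_
  · exact fun x hx => (continuousAt_tan.2 (hcos x hx).ne').continuousWithinAt
  · rw [interior_Ico]
    exact fun x hx =>
      (differentiableAt_tan.2 (hcos x (Ioo_subset_Ico_self hx)).ne').differentiableWithinAt
  · rw [interior_Ico]
    intro x hx y hy hxy
    have hcy := hcos y (Ioo_subset_Ico_self hy)
    have : cos y ≤ cos x :=
      cos_le_cos_of_nonneg_of_le_pi hx.1.le (by linarith [hy.2, pi_pos]) hxy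
    simp only [deriv_tan]
    gcongr

lemma mul_tan_le_mul_tan {a b : ℝ} (ha : 0 < a) (hab : a ≤ b) (hb : b < π / 2) :
    b * tan a ≤ a * tan b := by
  have hb0 : 0 < b := ha.trans_le hab
  have h := convexOn_tan.secant_mono (a := 0) ⟨le_rfl, by positivity⟩ ⟨ha.le, hab.trans_lt hb⟩
    ⟨hb0.le, hb⟩ ha.ne' hb0.ne' hab
  simp only [tan_zero, sub_zero] at h
  rw [div_le_div_iff₀ ha hb0] at h
  linarith

lemma cos_sqrt_pos_of_lt {t : ℝ} (ht : t < (π / 2) ^ 2) : 0 < cos √t :=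
  cos_pos_of_mem_Ioo ⟨by linarith [sqrt_nonneg t, pi_pos], (sqrt_lt' (by positivity)).2 ht⟩

lemma hasDerivAt_log_cos_sqrt {t : ℝ} (ht : 0 < t) (hcos : cos √t ≠ 0) :
    HasDerivAt (fun s => log (cos √s)) (-tan √t / (2 * √t)) t := by
  have h := (hasDerivAt_log hcos).comp t ((hasDerivAt_cos √t).comp t (hasDerivAt_sqrt ht.ne'))
  refine h.congr_deriv ?_
  rw [tan_eq_sin_div_cos]
  field_simp

lemma concaveOn_log_cos_sqrt : ConcaveOn ℝ (Ico 0 ((π / 2) ^ 2)) fun t => log (cos √t) := by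
  have hderiv : ∀ t ∈ Set.Ioo 0 ((π / 2) ^ 2),
      HasDerivAt (fun s => log (cos √s)) (-tan √t / (2 * √t)) t := fun t ht =>
    hasDerivAt_log_cos_sqrt ht.1 (cos_sqrt_pos_of_lt ht.2).ne'
  refine AntitoneOn.concaveOn_of_deriv (convex_Ico _ _) ?_ ?_ ?_
  · exact ContinuousOn.log (by fun_prop) fun t ht => (cos_sqrt_pos_of_lt ht.2).ne'
  · rw [interior_Ico]
    exact fun t ht => (hderiv t ht).differentiableAt.differentiableWithinAt
  · rw [interior_Ico]
    intro x hx y hy hxy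
    rw [(hderiv x hx).deriv, (hderiv y hy).deriv,
      div_le_div_iff₀ (by positivity [sqrt_pos.2 hy.1]) (by positivity [sqrt_pos.2 hx.1])]
    have := mul_tan_le_mul_tan (sqrt_pos.2 hx.1) (sqrt_le_sqrt hxy)
      ((sqrt_lt' (by positivity)).2 hy.2)
    linarith

end Real

namespace ConcaveOn

variable {s : Set ℝ} {f : ℝ → ℝ}

lemma map_add_le (hf : ConcaveOn ℝ s f) (h0 : 0 ∈ s) (hf0 : 0 ≤ f 0) {x y : ℝ} (hx : 0 ≤ x)
    (hy : 0 ≤ y) (hxy : x + y ∈ s) : f (x + y) ≤ f x + f y := by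
  rcases (add_nonneg hx hy).eq_or_lt with hsum | hsum
  · obtain ⟨rfl, rfl⟩ : x = 0 ∧ y = 0 := by constructor <;> linarith
    simpa using hf0
  have hchord : ∀ z, 0 ≤ z → z ≤ x + y → z / (x + y) * f (x + y) ≤ f z := by
    intro z hz hzs
    have h := hf.2 hxy h0 (show 0 ≤ z / (x + y) by positivity)
      (show 0 ≤ (x + y - z) / (x + y) from div_nonneg (by linarith) hsum.le)
      (by rw [← add_div, div_eq_one_iff_eq hsum.ne']; ring)
    simp only [smul_eq_mul, mul_zero, add_zero, div_mul_cancel₀ z hsum.ne'] at h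
    nlinarith [div_nonneg (sub_nonneg.2 hzs) hsum.le]
  have hx' := hchord x hx (by linarith)
  have hy' := hchord y hy (by linarith)
  calc f (x + y) = x / (x + y) * f (x + y) + y / (x + y) * f (x + y) := by
        field_simp
    _ ≤ f x + f y := add_le_add hx' hy'

lemma map_sum_le (hf : ConcaveOn ℝ s f) (h0 : 0 ∈ s) (hf0 : f 0 = 0) {ι : Type*} (t : Finset ι)
    (x : ι → ℝ) (hx : ∀ i ∈ t, 0 ≤ x i) (ht : ∑ i ∈ t, x i ∈ s) :
    f (∑ i ∈ t, x i) ≤ ∑ i ∈ t, f (x i) := by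
  induction t using Finset.cons_induction with
  | empty => simp [hf0]
  | cons a t _ ih =>
    rw [sum_cons] at ht
    rw [sum_cons, sum_cons]
    have hxa := hx a (mem_cons_self a t)
    have htail : ∀ i ∈ t, 0 ≤ x i := fun i hi => hx i (mem_cons_of_mem hi)
    have hts : ∑ i ∈ t, x i ∈ s :=
      hf.1.ordConnected.out h0 ht ⟨sum_nonneg htail, le_add_of_nonneg_left hxa⟩
    calc f (x a + ∑ i ∈ t, x i) ≤ f (x a) + f (∑ i ∈ t, x i) :=
          hf.map_add_le h0 hf0.ge hxa (sum_nonneg htail) ht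
      _ ≤ f (x a) + ∑ i ∈ t, f (x i) := by gcongr; exact ih htail hts

end ConcaveOn

namespace Real

variable {ι : Type*}

lemma cos_sqrt_sum_le_prod_cos_sqrt (s : Finset ι) (t : ι → ℝ) (ht : ∀ i ∈ s, 0 ≤ t i)
    (hsum : ∑ i ∈ s, t i < (π / 2) ^ 2) : cos √(∑ i ∈ s, t i) ≤ ∏ i ∈ s, cos √(t i) := by
  have hlt : ∀ i ∈ s, t i < (π / 2) ^ 2 := fun i hi =>
    (single_le_sum ht hi).trans_lt hsum
  have hlog := concaveOn_log_cos_sqrt.map_sum_le ⟨le_rfl, by positivity⟩ (by simp) s t ht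
    ⟨sum_nonneg ht, hsum⟩
  calc cos √(∑ i ∈ s, t i) = exp (log (cos √(∑ i ∈ s, t i))) :=
        (exp_log (cos_sqrt_pos_of_lt hsum)).symm
    _ ≤ exp (∑ i ∈ s, log (cos √(t i))) := exp_le_exp.2 hlog
    _ = ∏ i ∈ s, cos √(t i) := by
        rw [exp_sum]
        exact prod_congr rfl fun i hi => exp_log (cos_sqrt_pos_of_lt (hlt i hi))

variable {s : Finset ι} {θ : ι → ℝ}

lemma le_arccos_prod_cos (h0 : ∀ i ∈ s, 0 ≤ θ i) (hπ : ∀ i ∈ s, θ i ≤ π / 2) {j : ι}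
    (hj : j ∈ s) : θ j ≤ arccos (∏ i ∈ s, cos (θ i)) := by
  classical
  have hcos : ∀ i ∈ s, 0 ≤ cos (θ i) := fun i hi =>
    cos_nonneg_of_mem_Icc ⟨by linarith [pi_pos, h0 i hi], hπ i hi⟩
  have hprod : ∏ i ∈ s, cos (θ i) ≤ cos (θ j) := by
    rw [← mul_prod_erase s _ hj]
    exact mul_le_of_le_one_right (hcos j hj)
      (prod_le_one (fun i hi => hcos i (mem_of_mem_erase hi)) fun i _ => cos_le_one _)
  calc θ j = arccos (cos (θ j)) := (arccos_cos (h0 j hj) (by linarith [pi_pos, hπ j hj])).symm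
    _ ≤ arccos (∏ i ∈ s, cos (θ i)) := arccos_le_arccos hprod

lemma arccos_prod_cos_le_sqrt_sum_sq (h0 : ∀ i ∈ s, 0 ≤ θ i) (hπ : ∀ i ∈ s, θ i ≤ π / 2) :
    arccos (∏ i ∈ s, cos (θ i)) ≤ √(∑ i ∈ s, θ i ^ 2) := by
  rcases le_or_gt (π / 2) √(∑ i ∈ s, θ i ^ 2) with hbig | hsmall
  · refine (arccos_le_pi_div_two.2 (prod_nonneg fun i hi => ?_)).trans hbig
    exact cos_nonneg_of_mem_Icc ⟨by linarith [pi_pos, h0 i hi], hπ i hi⟩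
  have h := cos_sqrt_sum_le_prod_cos_sqrt s (θ · ^ 2) (fun _ _ => sq_nonneg _)
    ((sqrt_lt' (by positivity)).1 hsmall)
  rw [prod_congr rfl fun i hi => by rw [sqrt_sq (h0 i hi)]] at h
  calc arccos (∏ i ∈ s, cos (θ i)) ≤ arccos (cos √(∑ i ∈ s, θ i ^ 2)) := arccos_le_arccos h
    _ = √(∑ i ∈ s, θ i ^ 2) := arccos_cos (sqrt_nonneg _) (by linarith [pi_pos])

end Real

/-- `α₁` is the largest principal angle `θ ⟨0, hp⟩`; `α₂` is computed from the Gram determinant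
formula `⟪u₁ ∧ … ∧ u_p, v₁ ∧ … ∧ v_p⟫ = det ⟪uᵢ, vⱼ⟫`. -/
theorem principal_angle_le_exterior_angle_general {E : Type*} [NormedAddCommGroup E]
    [InnerProductSpace ℝ E]
    (p : ℕ) (hp : 0 < p)
    (θ : Fin p → ℝ) (hθ0 : ∀ i, 0 ≤ θ i) (hθπ : ∀ i, θ i ≤ Real.pi / 2)
    (hanti : Antitone θ)
    (u v : Fin p → E)
    (huv : ∀ i j, (inner ℝ (u i) (v j) : ℝ) = if i = j then Real.cos (θ j) else 0) :
    θ ⟨0, hp⟩ ≤ Real.arccos |(Matrix.of fun i j => (inner ℝ (u i) (v j) : ℝ)).det| ∧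
    Real.arccos |(Matrix.of fun i j => (inner ℝ (u i) (v j) : ℝ)).det|
      ≤ Real.sqrt p * θ ⟨0, hp⟩ := by
  have hdiag : (Matrix.of fun i j => (inner ℝ (u i) (v j) : ℝ))
      = Matrix.diagonal fun i => cos (θ i) := by
    ext i j
    by_cases h : i = j <;> simp [huv, h]
  have hcos : ∀ i, 0 ≤ cos (θ i) := fun i =>
    cos_nonneg_of_mem_Icc ⟨by linarith [pi_pos, hθ0 i], hθπ i⟩
  rw [hdiag, Matrix.det_diagonal, abs_of_nonneg (prod_nonneg fun i _ => hcos i)]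
  refine ⟨le_arccos_prod_cos (fun i _ => hθ0 i) (fun i _ => hθπ i) (mem_univ _), ?_⟩
  calc arccos (∏ i, cos (θ i)) ≤ √(∑ i, θ i ^ 2) :=
        arccos_prod_cos_le_sqrt_sum_sq (fun i _ => hθ0 i) (fun i _ => hθπ i)
    _ ≤ √(∑ _i : Fin p, θ ⟨0, hp⟩ ^ 2) :=
        sqrt_le_sqrt (sum_le_sum fun i _ => pow_le_pow_left₀ (hθ0 i) (hanti (Nat.zero_le i)) 2)
    _ = √p * θ ⟨0, hp⟩ := by
        rw [sum_const, card_univ, Fintype.card_fin, nsmul_eq_mul,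
          sqrt_mul (Nat.cast_nonneg _), sqrt_sq (hθ0 _)]

/-- Let `A₁, A₂` be `p`-dimensional subspaces of a finite-dimensional real inner product
space, with orthonormal bases `u`, `v` realizing the principal angles
`θ₁ ≥ … ≥ θ_p` (i.e. `⟪u i, v j⟫ = δᵢⱼ cos θⱼ`).  Let `α₁ := θ₁` be the largest principal
angle (which equals the Hausdorff distance between `P(A₁)` and `P(A₂)` in the projective
angle metric), and let `α₂` be the projective angle between the lines `Λ^p A₁` and
`Λ^p A₂` in `Λ^p E`, computed via the Gram determinant formula for the induced inner
product.  Then `α₁ ≤ α₂ ≤ √p · α₁`. -/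
theorem principal_angle_le_exterior_angle {E : Type*} [NormedAddCommGroup E]
    [InnerProductSpace ℝ E] [FiniteDimensional ℝ E]
    (p : ℕ) (hp : 0 < p) (A₁ A₂ : Submodule ℝ E)
    (θ : Fin p → ℝ) (hθ0 : ∀ i, 0 ≤ θ i) (hθπ : ∀ i, θ i ≤ Real.pi / 2)
    (hanti : Antitone θ)
    (u v : Fin p → E) (hu : Orthonormal ℝ u) (hv : Orthonormal ℝ v)
    (hA₁ : A₁ = Submodule.span ℝ (Set.range u))
    (hA₂ : A₂ = Submodule.span ℝ (Set.range v))
    (huv : ∀ i j, (inner ℝ (u i) (v j) : ℝ) = if i = j then Real.cos (θ j) else 0) :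
    θ ⟨0, hp⟩ ≤ Real.arccos |(Matrix.of fun i j => (inner ℝ (u i) (v j) : ℝ)).det| ∧
    Real.arccos |(Matrix.of fun i j => (inner ℝ (u i) (v j) : ℝ)).det|
      ≤ Real.sqrt p * θ ⟨0, hp⟩ :=
  principal_angle_le_exterior_angle_general p hp θ hθ0 hθπ hanti u v huv
end

section
/- Let E be a finite-dimensional real inner product space and A₁, A₂ two p-dimensional subspaces with principal angles θ₁ ≥ … ≥ θ_p. Then cos α₂ = ∏_{i=1}^p cos θᵢ, where α₂ is the projective angle between the lines Λ^p A₁ and Λ^p A₂; in particular (cos θ₁)^p ≤ cos α₂ ≤ cos θ₁. -/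
/-! In bases adapted to the principal angles the Gram matrix `(⟪u i, v j⟫)` is diagonal
with entries `cos θᵢ ∈ [0, 1]`, so its determinant `∏ cos θᵢ` lies in `[0, 1]`, where
`arccos` is inverted by `cos`. The bounds hold factorwise: `cos` is antitone on `[0, π]`, so every
`cos θᵢ` lies between `cos θ₁` and `1`. -/

open Finset Real

theorem Matrix.det_eq_prod_of_apply_eq_ite {n R : Type*} [Fintype n] [DecidableEq n]
    [CommRing R] (M : Matrix n n R) (d : n → R) (h : ∀ i j, M i j = if i = j then d j else 0) :
    M.det = ∏ i, d i := by
  have hM : M = Matrix.diagonal d := by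
    ext i j
    rw [h, Matrix.diagonal_apply]
    split_ifs with hij
    · rw [hij]
    · rfl
  rw [hM, Matrix.det_diagonal]

section PrincipalAngles

variable {ι : Type*} [Fintype ι] {θ : ι → ℝ}

lemma cos_mem_Icc_of_nonneg_of_le_pi_div_two {x : ℝ} (h0 : 0 ≤ x) (hπ : x ≤ π / 2) :
    cos x ∈ Set.Icc 0 1 :=
  ⟨cos_nonneg_of_mem_Icc ⟨by linarith [pi_pos], hπ⟩, cos_le_one x⟩

lemma prod_cos_mem_Icc (hθ0 : ∀ i, 0 ≤ θ i) (hθπ : ∀ i, θ i ≤ π / 2) :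
    ∏ i, cos (θ i) ∈ Set.Icc 0 1 :=
  have hcos i := cos_mem_Icc_of_nonneg_of_le_pi_div_two (hθ0 i) (hθπ i)
  ⟨prod_nonneg fun i _ => (hcos i).1, prod_le_one (fun i _ => (hcos i).1) fun i _ => (hcos i).2⟩

lemma prod_cos_le_cos (hθ0 : ∀ i, 0 ≤ θ i) (hθπ : ∀ i, θ i ≤ π / 2) (a : ι) :
    ∏ i, cos (θ i) ≤ cos (θ a) := by
  have hcos i := cos_mem_Icc_of_nonneg_of_le_pi_div_two (hθ0 i) (hθπ i)
  simpa using prod_le_prod_of_subset_of_le_one (subset_univ {a})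
    (fun i _ => (hcos i).1) fun i _ _ => (hcos i).2

lemma cos_pow_card_le_prod_cos (hθ0 : ∀ i, 0 ≤ θ i) (hθπ : ∀ i, θ i ≤ π / 2) {a : ι}
    (ha : ∀ i, θ i ≤ θ a) : cos (θ a) ^ Fintype.card ι ≤ ∏ i, cos (θ i) := by
  have hcos_le i : cos (θ a) ≤ cos (θ i) :=
    cos_le_cos_of_nonneg_of_le_pi (hθ0 i) (by linarith [hθπ a, pi_pos]) (ha i)
  simpa using prod_le_prod (s := univ)
    (fun _ _ => (cos_mem_Icc_of_nonneg_of_le_pi_div_two (hθ0 a) (hθπ a)).1) fun i _ => hcos_le i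

end PrincipalAngles

theorem cos_angle_exteriorPower_general {E : Type*} [NormedAddCommGroup E] [InnerProductSpace ℝ E]
    (p : ℕ) (hp : 0 < p)
    (θ : Fin p → ℝ) (hθ0 : ∀ i, 0 ≤ θ i) (hθπ : ∀ i, θ i ≤ Real.pi / 2)
    (hanti : Antitone θ)
    (u v : Fin p → E)
    (huv : ∀ i j, (inner ℝ (u i) (v j) : ℝ) = if i = j then Real.cos (θ j) else 0) :
    Real.cos (Real.arccos |(Matrix.of fun i j => (inner ℝ (u i) (v j) : ℝ)).det|)
        = ∏ i, Real.cos (θ i) ∧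
    (Real.cos (θ ⟨0, hp⟩)) ^ p ≤ ∏ i, Real.cos (θ i) ∧
    ∏ i, Real.cos (θ i) ≤ Real.cos (θ ⟨0, hp⟩) := by
  have hdet :=
    Matrix.det_eq_prod_of_apply_eq_ite (Matrix.of fun i j => inner ℝ (u i) (v j)) _ huv
  obtain ⟨hprod0, hprod1⟩ := prod_cos_mem_Icc hθ0 hθπ
  refine ⟨?_, ?_, prod_cos_le_cos hθ0 hθπ _⟩
  · rw [hdet, abs_of_nonneg hprod0, cos_arccos (by linarith) hprod1]
  · have hmax (i : Fin p) : θ i ≤ θ ⟨0, hp⟩ :=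
      hanti (show ⟨0, hp⟩ ≤ i from Nat.zero_le _)
    simpa using cos_pow_card_le_prod_cos hθ0 hθπ hmax

/-- Let `A₁, A₂` be `p`-dimensional subspaces of a finite-dimensional real inner product
space, with orthonormal bases `u`, `v` realizing the principal angles
`θ₁ ≥ … ≥ θ_p` (i.e. `⟪u i, v j⟫ = δᵢⱼ cos θⱼ`).  The cosine of the projective angle `α₂`
between the lines `Λ^p A₁` and `Λ^p A₂` — computed through the Gram determinant formula for
the induced inner product on `Λ^p E` — equals `∏ᵢ cos θᵢ`; in particular
`(cos θ₁)^p ≤ cos α₂ ≤ cos θ₁`. -/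
theorem cos_angle_exteriorPower {E : Type*} [NormedAddCommGroup E] [InnerProductSpace ℝ E]
    [FiniteDimensional ℝ E] (p : ℕ) (hp : 0 < p) (A₁ A₂ : Submodule ℝ E)
    (θ : Fin p → ℝ) (hθ0 : ∀ i, 0 ≤ θ i) (hθπ : ∀ i, θ i ≤ Real.pi / 2)
    (hanti : Antitone θ)
    (u v : Fin p → E) (hu : Orthonormal ℝ u) (hv : Orthonormal ℝ v)
    (hA₁ : A₁ = Submodule.span ℝ (Set.range u))
    (hA₂ : A₂ = Submodule.span ℝ (Set.range v))
    (huv : ∀ i j, (inner ℝ (u i) (v j) : ℝ) = if i = j then Real.cos (θ j) else 0) :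
    Real.cos (Real.arccos |(Matrix.of fun i j => (inner ℝ (u i) (v j) : ℝ)).det|)
        = ∏ i, Real.cos (θ i) ∧
    (Real.cos (θ ⟨0, hp⟩)) ^ p ≤ ∏ i, Real.cos (θ i) ∧
    ∏ i, Real.cos (θ i) ≤ Real.cos (θ ⟨0, hp⟩) :=
  cos_angle_exteriorPower_general p hp θ hθ0 hθπ hanti u v huv
end

section
/- Let g be an invertible linear endomorphism of a d-dimensional real vector space with eigenvalues λ₁,…,λ_d (with multiplicity, over ℂ) ordered by nondecreasing modulus, and let p + q = d with 1 ≤ p ≤ d. Then the p-th exterior power Λ^p g has a unique eigenvalue of maximal modulus, and this eigenvalue is simple, if and only if |λ_q| < |λ_{q+1}|. -/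
/-!
Write `a i = |λ_i|` and `T` for the top `p` indices `{q, …, d-1}`. For a `p`-set `s ≠ T`, the sets
`s \ T` and `T \ s` have the same size `k ≥ 1`, every index of the first is `≤ q-1` and every
index of the second is `≥ q`, so `∏_{s \ T} a ≤ a_{q-1}^k ≤ a_q^k ≤ ∏_{T \ s} a`, strictly if
`a_{q-1} < a_q`. Hence `T` maximises the product, uniquely under the gap; without the gap,
exchanging `q` for `q-1` in `T` gives a second maximiser.
-/

open Finset NNReal

section

variable {ι : Type*} [DecidableEq ι]

theorem prod_le_prod_of_card_eq {M : Type*} [CommMonoid M] [PartialOrder M] [IsOrderedMonoid M]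
    {s t : Finset ι} {a : ι → M} (c : M) (hst : #s = #t)
    (hs : ∀ i ∈ s \ t, a i ≤ c) (ht : ∀ j ∈ t \ s, c ≤ a j) :
    ∏ i ∈ s, a i ≤ ∏ i ∈ t, a i := by
  rw [← prod_inter_mul_prod_sdiff s t, ← prod_inter_mul_prod_sdiff t s, inter_comm t s]
  refine mul_le_mul_right ?_ _
  calc ∏ i ∈ s \ t, a i ≤ c ^ #(s \ t) := prod_le_pow_card _ _ _ hs
    _ = c ^ #(t \ s) := by rw [card_sdiff_comm hst]
    _ ≤ ∏ j ∈ t \ s, a j := pow_card_le_prod _ _ _ ht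

theorem prod_lt_prod_of_card_eq {s t : Finset ι} {a : ι → ℝ≥0} {c c' : ℝ≥0}
    (hpos : ∀ i ∈ s, 0 < a i) (hst : #s = #t) (hne : s ≠ t)
    (hs : ∀ i ∈ s \ t, a i ≤ c) (hc : c < c') (ht : ∀ j ∈ t \ s, c' ≤ a j) :
    ∏ i ∈ s, a i < ∏ i ∈ t, a i := by
  rw [← prod_inter_mul_prod_sdiff s t, ← prod_inter_mul_prod_sdiff t s, inter_comm t s]
  have hk : #(s \ t) ≠ 0 :=
    card_ne_zero.mpr (sdiff_nonempty.mpr fun h => hne (eq_of_subset_of_card_le h hst.ge))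
  refine mul_lt_mul_of_pos_left ?_ (prod_pos fun i hi => hpos i (mem_inter.1 hi).1)
  calc ∏ i ∈ s \ t, a i ≤ c ^ #(s \ t) := prod_le_pow_card _ _ _ hs
    _ < c' ^ #(s \ t) := pow_lt_pow_left₀ hc c.2 hk
    _ = c' ^ #(t \ s) := by rw [card_sdiff_comm hst]
    _ ≤ ∏ j ∈ t \ s, a j := pow_card_le_prod _ _ _ ht

end

section

variable {ι : Type*} [LinearOrder ι] [LocallyFiniteOrderTop ι] {a : ι → ℝ≥0}

theorem prod_le_prod_Ici (ha : Monotone a) (m : ι) {s : Finset ι} (hs : #s = #(Ici m)) :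
    ∏ i ∈ s, a i ≤ ∏ i ∈ Ici m, a i :=
  prod_le_prod_of_card_eq (a m) hs
    (fun i hi => ha (not_le.1 (by simpa using (mem_sdiff.1 hi).2)).le)
    (fun j hj => ha (mem_Ici.1 (mem_sdiff.1 hj).1))

theorem prod_lt_prod_Ici (ha : Monotone a) (hpos : ∀ i, 0 < a i) {k m : ι} (hkm : k ⋖ m)
    (hlt : a k < a m) {s : Finset ι} (hs : #s = #(Ici m)) (hne : s ≠ Ici m) :
    ∏ i ∈ s, a i < ∏ i ∈ Ici m, a i :=
  prod_lt_prod_of_card_eq (fun i _ => hpos i) hs hne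
    (fun i hi => ha (hkm.le_of_lt (by simpa using (mem_sdiff.1 hi).2))) hlt
    (fun j hj => ha (mem_Ici.1 (mem_sdiff.1 hj).1))

theorem exists_strict_max_prod_iff (ha : Monotone a) (hpos : ∀ i, 0 < a i) {k m : ι}
    (hkm : k ⋖ m) :
    (∃ s₀ : Finset ι, #s₀ = #(Ici m) ∧
        ∀ s : Finset ι, #s = #(Ici m) → s ≠ s₀ → ∏ i ∈ s, a i < ∏ i ∈ s₀, a i) ↔
      a k < a m := by
  refine ⟨fun ⟨s₀, hs₀, hmax⟩ => ?_, fun hlt => ⟨Ici m, rfl, fun s hs hne =>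
    prod_lt_prod_Ici ha hpos hkm hlt hs hne⟩⟩
  by_contra hle
  have heq : a k = a m := (ha hkm.le).antisymm (not_lt.1 hle)
  obtain rfl : s₀ = Ici m := by
    by_contra hne
    exact (hmax _ rfl (Ne.symm hne)).not_ge (prod_le_prod_Ici ha m hs₀)
  have hk : k ∉ Ioi m := by simpa using hkm.lt.le
  have hcard : #(insert k (Ioi m)) = #(Ici m) := by
    rw [← Ioi_insert, card_insert_of_notMem hk, card_insert_of_notMem (by simp)]
  have hne : insert k (Ioi m) ≠ Ici m := fun h => by
    simpa using hkm.lt.not_ge (mem_Ici.1 (h ▸ mem_insert_self k _))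
  have hprod : ∏ i ∈ insert k (Ioi m), a i = ∏ i ∈ Ici m, a i := by
    rw [← Ioi_insert, prod_insert hk, prod_insert (by simp), heq]
  exact (hmax _ hcard hne).ne hprod

end

/-- Let `λ₁, …, λ_d` be the (nonzero, complex) eigenvalues of an invertible linear map `g`
of a `d`-dimensional real vector space, ordered by nondecreasing modulus, and `p + q = d`.
The eigenvalues of `Λ^p g`, counted with multiplicity, are the products `λ_{i₁}⋯λ_{i_p}`
over `p`-element index sets.  Then `Λ^p g` has a unique and simple eigenvalue of maximal
modulus (i.e. `Λ^p g` is proximal) iff `|λ_q| < |λ_{q+1}|`. -/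
theorem exteriorPower_proximal_iff (d p q : ℕ) (hp : 1 ≤ p) (hq : 1 ≤ q)
    (hpq : p + q = d) (lam : Fin d → ℂ) (hne : ∀ i, lam i ≠ 0)
    (hmono : Monotone fun i => ‖lam i‖) :
    (∃ s₀ : Finset (Fin d), s₀.card = p ∧
        ∀ s : Finset (Fin d), s.card = p → s ≠ s₀ →
          ‖∏ i ∈ s, lam i‖ < ‖∏ i ∈ s₀, lam i‖) ↔
      ‖lam ⟨q - 1, by omega⟩‖ < ‖lam ⟨q, by omega⟩‖ := by
  have hcard : #(Ici (⟨q, by omega⟩ : Fin d)) = p := by simp only [Fin.card_Ici]; omega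
  have hkm : (⟨q - 1, by omega⟩ : Fin d) ⋖ ⟨q, by omega⟩ := by
    simp only [Fin.covBy_iff, Nat.covBy_iff_add_one_eq]; omega
  have key := exists_strict_max_prod_iff (a := fun i => ‖lam i‖₊) hmono
    (fun i => nnnorm_pos.2 (hne i)) hkm
  simp only [hcard, ← nnnorm_prod, ← NNReal.coe_lt_coe, coe_nnnorm] at key
  exact key
end

section
/- Let g be an invertible linear endomorphism of a finite-dimensional real inner product space E, and suppose E = F ⊕ F' is an orthogonal direct sum of g-invariant subspaces with dim F = p. Let s₁ ≤ … ≤ s_p be the singular values of g restricted to F and s'₁ ≤ … ≤ s'_q the singular values of g restricted to F'. Then the singular values of g on E are exactly s'₁,…,s'_q, s₁,…,s_p (as a multiset), and the singular value of Λ^p g on the line Λ^p F equals s₁⋯s_p. -/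
/-!
Since `F ⟂ F'`, the two singular value decompositions concatenate to one of `g`. For the
exterior power, `‖g u₁ ∧ … ∧ g u_p‖²` is the Gram determinant of `g u₁, …, g u_p`, and
`g u_i = s_i w_i` with `w` orthonormal makes that Gram matrix `diag (s_i²)`.
-/

open Matrix

open scoped InnerProductSpace ComplexConjugate

section

variable {𝕜 E ι κ : Type*} [RCLike 𝕜] [NormedAddCommGroup E] [InnerProductSpace 𝕜 E]

theorem Orthonormal.sumElim {a : ι → E} {b : κ → E} (ha : Orthonormal 𝕜 a)
    (hb : Orthonormal 𝕜 b) (hab : ∀ i j, ⟪a i, b j⟫_𝕜 = 0) :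
    Orthonormal 𝕜 (Sum.elim a b) := by
  refine ⟨Sum.forall.2 ⟨ha.1, hb.1⟩, ?_⟩
  rintro (i | i) (j | j) hij
  · exact ha.2 fun h => hij (congrArg Sum.inl h)
  · exact hab i j
  · exact inner_eq_zero_symm.mp (hab j i)
  · exact hb.2 fun h => hij (congrArg Sum.inr h)

theorem Matrix.gram_smul_orthonormal [DecidableEq ι] {w : ι → E} (hw : Orthonormal 𝕜 w)
    (s : ι → 𝕜) : gram 𝕜 (fun i => s i • w i) = diagonal fun i => conj (s i) * s i := by
  ext i j
  rw [gram_apply, inner_smul_left, inner_smul_right, orthonormal_iff_ite.mp hw, diagonal_apply]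
  split_ifs with h
  · rw [h, mul_one]
  · rw [mul_zero, mul_zero]

end

theorem Matrix.sqrt_det_gram_smul_orthonormal {E ι : Type*} [NormedAddCommGroup E]
    [InnerProductSpace ℝ E] [Fintype ι] [DecidableEq ι] {w : ι → E} (hw : Orthonormal ℝ w)
    (s : ι → ℝ) : √(gram ℝ fun i => s i • w i).det = ∏ i, |s i| := by
  simp only [gram_smul_orthonormal hw, det_diagonal, conj_trivial, ← sq, Finset.prod_pow,
    Real.sqrt_sq_eq_abs, Finset.abs_prod]

theorem singular_values_of_orthogonal_invariant_splitting_general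
    {E : Type*} [NormedAddCommGroup E] [InnerProductSpace ℝ E]
    (g : E ≃ₗ[ℝ] E) (F F' : Submodule ℝ E) (p q : ℕ)
    (horth : ∀ x ∈ F, ∀ y ∈ F', (inner ℝ x y : ℝ) = 0) (hcompl : F ⊔ F' = ⊤)
    (s : Fin p → ℝ) (s' : Fin q → ℝ)
    (hsnn : ∀ i, 0 ≤ s i)
    (u w : Fin p → E) (hu : Orthonormal ℝ u) (hw : Orthonormal ℝ w)
    (huF : ∀ i, u i ∈ F) (hwF : ∀ i, w i ∈ F)
    (huspan : Submodule.span ℝ (Set.range u) = F)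
    (hsvd : ∀ i, g (u i) = s i • w i)
    (u' w' : Fin q → E) (hu' : Orthonormal ℝ u') (hw' : Orthonormal ℝ w')
    (hu'F : ∀ i, u' i ∈ F') (hw'F : ∀ i, w' i ∈ F')
    (hu'span : Submodule.span ℝ (Set.range u') = F')
    (hsvd' : ∀ i, g (u' i) = s' i • w' i) :
    (Orthonormal ℝ (Sum.elim u' u) ∧ Orthonormal ℝ (Sum.elim w' w) ∧
      Submodule.span ℝ (Set.range (Sum.elim u' u)) = ⊤ ∧
      ∀ i : Fin q ⊕ Fin p, g (Sum.elim u' u i) = Sum.elim s' s i • Sum.elim w' w i) ∧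
    Real.sqrt (Matrix.of fun i j : Fin p => (inner ℝ (g (u i)) (g (u j)) : ℝ)).det
      = ∏ i, s i := by
  refine ⟨⟨hu'.sumElim hu fun i j => inner_eq_zero_symm.mp (horth _ (huF j) _ (hu'F i)),
    hw'.sumElim hw fun i j => inner_eq_zero_symm.mp (horth _ (hwF j) _ (hw'F i)), ?_,
    Sum.forall.2 ⟨hsvd', hsvd⟩⟩, ?_⟩
  · rw [Set.Sum.elim_range, Submodule.span_union, hu'span, huspan, sup_comm, hcompl]
  · change √(gram ℝ fun i => g (u i)).det = _
    rw [funext hsvd, sqrt_det_gram_smul_orthonormal hw]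
    exact Finset.prod_congr rfl fun i _ => abs_of_nonneg (hsnn i)

/-- Let `E = F ⊕ F'` be an orthogonal direct sum of `g`-invariant subspaces, and let
`s₁ ≤ … ≤ s_p` (resp. `s'₁ ≤ … ≤ s'_q`) be the singular values of `g` on `F`
(resp. `F'`), presented through singular value decompositions `g (u i) = s i • w i`,
`g (u' i) = s' i • w' i` with orthonormal bases.  Then the singular values of `g` on `E`
are exactly `s'₁, …, s'_q, s₁, …, s_p` (witnessed by the combined singular value
decomposition), and the singular value of `Λ^p g` on the line `Λ^p F` — i.e. the norm of
the image of the unit vector `u₁ ∧ … ∧ u_p`, computed via the Gram determinant formula for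
the induced inner product on `Λ^p E` — equals `s₁ ⋯ s_p`. -/
theorem singular_values_of_orthogonal_invariant_splitting
    {E : Type*} [NormedAddCommGroup E] [InnerProductSpace ℝ E] [FiniteDimensional ℝ E]
    (g : E ≃ₗ[ℝ] E) (F F' : Submodule ℝ E) (p q : ℕ)
    (horth : ∀ x ∈ F, ∀ y ∈ F', (inner ℝ x y : ℝ) = 0) (hcompl : F ⊔ F' = ⊤)
    (hgF : ∀ x ∈ F, g x ∈ F) (hgF' : ∀ x ∈ F', g x ∈ F')
    (s : Fin p → ℝ) (s' : Fin q → ℝ)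
    (hs : Monotone s) (hs' : Monotone s') (hsnn : ∀ i, 0 ≤ s i) (hs'nn : ∀ i, 0 ≤ s' i)
    (u w : Fin p → E) (hu : Orthonormal ℝ u) (hw : Orthonormal ℝ w)
    (huF : ∀ i, u i ∈ F) (hwF : ∀ i, w i ∈ F)
    (huspan : Submodule.span ℝ (Set.range u) = F)
    (hsvd : ∀ i, g (u i) = s i • w i)
    (u' w' : Fin q → E) (hu' : Orthonormal ℝ u') (hw' : Orthonormal ℝ w')
    (hu'F : ∀ i, u' i ∈ F') (hw'F : ∀ i, w' i ∈ F')
    (hu'span : Submodule.span ℝ (Set.range u') = F')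
    (hsvd' : ∀ i, g (u' i) = s' i • w' i) :
    (Orthonormal ℝ (Sum.elim u' u) ∧ Orthonormal ℝ (Sum.elim w' w) ∧
      Submodule.span ℝ (Set.range (Sum.elim u' u)) = ⊤ ∧
      ∀ i : Fin q ⊕ Fin p, g (Sum.elim u' u i) = Sum.elim s' s i • Sum.elim w' w i) ∧
    Real.sqrt (Matrix.of fun i j : Fin p => (inner ℝ (g (u i)) (g (u j)) : ℝ)).det
      = ∏ i, s i :=
  singular_values_of_orthogonal_invariant_splitting_general g F F' p q horth hcompl s s' hsnn u w hu
    hw huF hwF huspan hsvd u' w' hu' hw' hu'F hw'F hu'span hsvd'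
end

section
/- Let γ be an invertible linear endomorphism of a finite-dimensional real inner product space E that is proximal, with attracting line E^s and repelling hyperplane E^u orthogonal to each other, and top eigenvalue λ. Consider the chart π_u : P(E) ∖ P(E^u) → E^u sending a line spanned by x = x_u + x_s (with x_u ∈ E^u, x_s ∈ E^s ≅ ℝ, x_s ≠ 0) to x_u/x_s. Then the map induced by γ in this chart is the linear map (1/λ)·(γ|_{E^u}), whose Lipschitz constant equals s̃(γ) := ‖γ|_{E^u}‖/|λ|. -/
/-! Since `γ e = λ e`, the line through `x + e` goes to the line through `λ⁻¹ γ x + e`, so in the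
chart `γ` acts as the linear map `λ⁻¹ γ`. For a linear map, Lipschitz constants on a subspace
are exactly the bounds `‖f x‖ ≤ K ‖x‖`, and scaling by `λ⁻¹` divides the least such bound by
`|λ|`. -/

open Filter Topology

theorem map_add_eq_smul_smul_inv_add_of_apply_eq_smul {K M F : Type*} [DivisionRing K]
    [AddCommGroup M] [Module K M] [FunLike F M M] [AddHomClass F M M]
    (f : F) {c : K} (hc : c ≠ 0) {e : M} (he : f e = c • e) (x : M) :
    f (x + e) = c • (c⁻¹ • f x + e) := by
  rw [smul_add, smul_inv_smul₀ hc, map_add, he]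

section NormBounds

variable {𝕜 E F : Type*} [NormedField 𝕜] [SeminormedAddCommGroup E]
  [SeminormedAddCommGroup F] [NormedSpace 𝕜 F]

def normBounds (f : E → F) (S : Set E) : Set ℝ :=
  {K | 0 ≤ K ∧ ∀ x ∈ S, ‖f x‖ ≤ K * ‖x‖}

theorem isLeast_normBounds_smul {f : E → F} {S : Set E} {s : ℝ}
    (hs : IsLeast (normBounds f S) s) {c : 𝕜} (hc : c ≠ 0) :
    IsLeast (normBounds (fun x => c • f x) S) (‖c‖ * s) := by
  have hc' : 0 < ‖c‖ := norm_pos_iff.mpr hc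
  refine ⟨⟨mul_nonneg hc'.le hs.1.1, fun x hx => ?_⟩, fun K ⟨hK, hKS⟩ => ?_⟩
  · rw [norm_smul, mul_assoc]
    exact mul_le_mul_of_nonneg_left (hs.1.2 x hx) hc'.le
  · rw [← le_div_iff₀' hc']
    refine hs.2 ⟨div_nonneg hK hc'.le, fun x hx => ?_⟩
    rw [div_mul_eq_mul_div, le_div_iff₀' hc', ← norm_smul]
    exact hKS x hx

end NormBounds

theorem LinearMap.lipschitzBounds_eq_normBounds {R E F : Type*} [Ring R]
    [SeminormedAddCommGroup E] [SeminormedAddCommGroup F] [Module R E] [Module R F]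
    (f : E →ₗ[R] F) (p : Submodule R E) :
    {K : ℝ | 0 ≤ K ∧ ∀ x ∈ p, ∀ y ∈ p, ‖f x - f y‖ ≤ K * ‖x - y‖} = normBounds f p := by
  ext K
  refine and_congr_right fun _ => ⟨fun h x hx => ?_, fun h x hx y hy => ?_⟩
  · simpa using h x hx 0 p.zero_mem
  · simpa using h (x - y) (p.sub_mem hx hy)

theorem proximal_chart_contraction_general
    {E : Type*} [NormedAddCommGroup E] [InnerProductSpace ℝ E]
    (γ : E ≃ₗ[ℝ] E) (e : E)
    (lam : ℝ) (hlam : lam ≠ 0) (heig : γ e = lam • e)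
    (Eu : Submodule ℝ E)
    (s : ℝ) (hs : IsLeast {K : ℝ | 0 ≤ K ∧ ∀ x ∈ Eu, ‖γ x‖ ≤ K * ‖x‖} s) :
    (∀ x ∈ Eu, γ (x + e) = lam • (lam⁻¹ • γ x + e)) ∧
    IsLeast {K : ℝ | 0 ≤ K ∧ ∀ x ∈ Eu, ∀ y ∈ Eu,
      ‖lam⁻¹ • γ x - lam⁻¹ • γ y‖ ≤ K * ‖x - y‖} (s / |lam|) := by
  refine ⟨fun x _ => map_add_eq_smul_smul_inv_add_of_apply_eq_smul γ hlam heig x, ?_⟩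
  have hlip := (lam⁻¹ • (γ : E →ₗ[ℝ] E)).lipschitzBounds_eq_normBounds Eu
  simp only [LinearMap.smul_apply, LinearEquiv.coe_coe] at hlip
  rw [hlip, div_eq_inv_mul, ← abs_inv, ← Real.norm_eq_abs]
  exact isLeast_normBounds_smul (f := fun x => γ x) hs (inv_ne_zero hlam)

/-- Let `γ` be proximal with attracting line `ℝ·e` (top eigenvalue `λ`) orthogonal to the
invariant repelling hyperplane `E^u`.  In the affine chart `π_u` sending the line through
`x_u + x_s·e` to `x_u / x_s`, the induced map is the linear map `(1/λ)·(γ|_{E^u})`, and its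
Lipschitz constant equals `s̃(γ) = ‖γ|_{E^u}‖ / |λ|`. -/
theorem proximal_chart_contraction
    {E : Type*} [NormedAddCommGroup E] [InnerProductSpace ℝ E] [FiniteDimensional ℝ E]
    (γ : E ≃ₗ[ℝ] E) (e : E) (he : ‖e‖ = 1)
    (lam : ℝ) (hlam : lam ≠ 0) (heig : γ e = lam • e)
    (Eu : Submodule ℝ E) (hEuinv : ∀ x ∈ Eu, γ x ∈ Eu)
    (hcompl : IsCompl (Submodule.span ℝ {e}) Eu)
    (horth : ∀ x ∈ Eu, (inner ℝ e x : ℝ) = 0)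
    (hspec : ∀ x ∈ Eu,
      Tendsto (fun n : ℕ => (lam ^ n)⁻¹ • ((γ : E →ₗ[ℝ] E) ^ n) x) atTop (𝓝 0))
    (s : ℝ) (hs : IsLeast {K : ℝ | 0 ≤ K ∧ ∀ x ∈ Eu, ‖γ x‖ ≤ K * ‖x‖} s) :
    (∀ x ∈ Eu, γ (x + e) = lam • (lam⁻¹ • γ x + e)) ∧
    IsLeast {K : ℝ | 0 ≤ K ∧ ∀ x ∈ Eu, ∀ y ∈ Eu,
      ‖lam⁻¹ • γ x - lam⁻¹ • γ y‖ ≤ K * ‖x - y‖} (s / |lam|) :=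
  proximal_chart_contraction_general γ e lam hlam heig Eu s hs
end

section
/- Let Γ be a group of affine transformations of a finite-dimensional real normed vector space V. Suppose there exist a constant c > 0 and, for each g ∈ Γ ∖ {1}, an affine map π_g : V → W into a fixed normed vector space W with Lipschitz constant at most c, and a vector M(g) ∈ W with π_g ∘ g = (translation by M(g)) ∘ π_g. If for every R > 0 the set {g ∈ Γ ∖ {1} : ‖M(g)‖ ≤ R} is finite, then Γ acts properly discontinuously on V. -/
/-- Properness criterion: let `Γ` be a group of affine transformations of `V` and suppose
that for each `g ∈ Γ ∖ {1}` there are an affine map `π_g : V → W` with Lipschitz constant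
at most `c` and a vector `M(g) ∈ W` with `π_g ∘ g = (translation by M(g)) ∘ π_g`.  If for
every `R > 0` the set `{g ∈ Γ ∖ {1} : ‖M(g)‖ ≤ R}` is finite, then `Γ` acts properly
discontinuously on `V`. -/
theorem properly_discontinuous_of_margulis_invariants
    {V W : Type*} [NormedAddCommGroup V] [NormedSpace ℝ V] [FiniteDimensional ℝ V]
    [NormedAddCommGroup W] [NormedSpace ℝ W]
    (Γ : Subgroup (V ≃ᵃ[ℝ] V)) (c : ℝ) (hc : 0 < c)
    (P : (V ≃ᵃ[ℝ] V) → (V →ᵃ[ℝ] W)) (M : (V ≃ᵃ[ℝ] V) → W)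
    (hLip : ∀ g ∈ Γ, g ≠ 1 → ∀ x y : V, ‖P g x - P g y‖ ≤ c * ‖x - y‖)
    (hM : ∀ g ∈ Γ, g ≠ 1 → ∀ x : V, P g (g x) = P g x + M g)
    (hfin : ∀ R : ℝ, 0 < R → {g : V ≃ᵃ[ℝ] V | g ∈ Γ ∧ g ≠ 1 ∧ ‖M g‖ ≤ R}.Finite) :
    ∀ K : Set V, IsCompact K →
      {g : V ≃ᵃ[ℝ] V | g ∈ Γ ∧ ((⇑g '' K) ∩ K).Nonempty}.Finite := by
  intro K hK
  obtain ⟨B, hB⟩ := hK.isBounded.exists_norm_le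
  set R : ℝ := c * (2 * max B 0 + 1) with hR
  have hRpos : 0 < R := by positivity
  have hsub : {g : V ≃ᵃ[ℝ] V | g ∈ Γ ∧ ((⇑g '' K) ∩ K).Nonempty} ⊆
      insert 1 {g : V ≃ᵃ[ℝ] V | g ∈ Γ ∧ g ≠ 1 ∧ ‖M g‖ ≤ R} := by
    rintro g ⟨hgΓ, y, ⟨x, hxK, rfl⟩, hgxK⟩
    by_cases hg1 : g = 1
    · subst hg1; exact Set.mem_insert _ _
    · refine Set.mem_insert_of_mem _ ⟨hgΓ, hg1, ?_⟩
      have h1 : ‖M g‖ = ‖P g (g x) - P g x‖ := by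
        rw [hM g hgΓ hg1 x]; simp
      have h2 : ‖g x - x‖ ≤ 2 * max B 0 + 1 := by
        calc ‖g x - x‖ ≤ ‖g x‖ + ‖x‖ := norm_sub_le _ _
          _ ≤ max B 0 + max B 0 := add_le_add
              ((hB _ hgxK).trans (le_max_left _ _)) ((hB _ hxK).trans (le_max_left _ _))
          _ ≤ 2 * max B 0 + 1 := by linarith
      calc ‖M g‖ = ‖P g (g x) - P g x‖ := h1
        _ ≤ c * ‖g x - x‖ := hLip g hgΓ hg1 _ _
        _ ≤ R := by rw [hR]; exact mul_le_mul_of_nonneg_left h2 hc.le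
  exact ((hfin R hRpos).insert 1).subset hsub
end

section
/- Let g₁,…,g_k be generators of a free group and consider a cyclically reduced word g = g_{i₁}^{σ₁}⋯g_{i_l}^{σ_l} of length l ≥ 2 (each σ_m = ±1). Then there exists m with 0 < m < l such that both subwords g' = g_{i₁}^{σ₁}⋯g_{i_m}^{σ_m} and g'' = g_{i_{m+1}}^{σ_{m+1}}⋯g_{i_l}^{σ_l} are cyclically reduced. -/
/-- A word `w 0, …, w (l-1)` on letters `ι × Bool` (a generator index together with a sign)
which is cyclically reduced and of length `l ≥ 2` can be split into two nonempty cyclically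
reduced subwords: there is `0 < m < l` such that `w 0 ⋯ w (m-1)` and `w m ⋯ w (l-1)` are
both cyclically reduced. -/
theorem split_cyclically_reduced_word {ι : Type*} (l : ℕ) (hl : 2 ≤ l)
    (w : ℕ → ι × Bool)
    (hred : ∀ m : ℕ, m + 1 ≤ l - 1 → w (m + 1) ≠ ((w m).1, !(w m).2))
    (hcyc : w 0 ≠ ((w (l - 1)).1, !(w (l - 1)).2)) :
    ∃ m : ℕ, 0 < m ∧ m < l ∧
      w 0 ≠ ((w (m - 1)).1, !(w (m - 1)).2) ∧
      w m ≠ ((w (l - 1)).1, !(w (l - 1)).2) := by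
  classical
  by_contra hcon
  push_neg at hcon
  have inv_ne : ∀ a : ι × Bool, a ≠ (a.1, !a.2) := by
    intro a h
    have := congrArg Prod.snd h
    simp at this
  have b1 : w 1 = ((w (l - 1)).1, !(w (l - 1)).2) := by
    have := hcon 1 one_pos (by omega)
    simpa using this (by simpa using inv_ne (w 0))
  rcases eq_or_lt_of_le hl with h2 | h3
  · -- l = 2
    have : w 1 = ((w 1).1, !(w 1).2) := by
      have hl1 : l - 1 = 1 := by omega
      rwa [hl1] at b1
    exact inv_ne (w 1) this
  · -- l ≥ 3
    have hex : ∃ m, 0 < m ∧ m < l ∧ w 0 = ((w (m - 1)).1, !(w (m - 1)).2) := by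
      refine ⟨l - 1, by omega, by omega, ?_⟩
      by_contra hne
      exact inv_ne (w (l - 1)) (hcon (l - 1) (by omega) (by omega) (by rwa [show l - 1 - 1 = l - 2 by omega]))
    set m := Nat.find hex with hm
    obtain ⟨hm0, hml, hmeq⟩ := Nat.find_spec hex
    have hm2 : 2 ≤ m := by
      by_contra h
      have hm1 : m = 1 := by omega
      rw [← hm, hm1] at hmeq
      exact inv_ne (w 0) (by simpa using hmeq)
    have hnot := Nat.find_min hex (show m - 1 < m by omega)
    push_neg at hnot
    have hne : w 0 ≠ ((w (m - 1 - 1)).1, !(w (m - 1 - 1)).2) := hnot (by omega) (by omega)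
    have b2 : w (m - 1) = ((w (l - 1)).1, !(w (l - 1)).2) := hcon (m - 1) (by omega) (by omega) hne
    rw [b2] at hmeq
    simp only [Bool.not_not] at hmeq
    have hmeq' : w 0 = w (l - 1) := hmeq
    rw [← hmeq'] at b1
    exact hred 0 (by omega) b1
end
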